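/- Let K be a satisfiable DL-Lite_core^bag ontology with canonical bag model C(K) = ⋃_{i≥0} C_i(K), and let q be a rooted CQ having n atoms. Then the bag answers of q over C(K) equal the bag answers of q over the finite stage C_n(K): q^{C(K)} = q^{C_n(K)}. -/

import Mathlib

/-!
Common formalization of the bag semantics of DL-Lite ontologies
(Nikolaou et al., "The Bag Semantics of Ontology-Based Data Access").
-/

open scoped Classical

noncomputable section

/-- Individuals (constants). -/
abbrev Ind : Type := ℕ
/-- Variables. -/
abbrev Var : Type := ℕ
/-- Atomic concepts (unary predicates). -/
abbrev AtomicConcept : Type := ℕ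
/-- Atomic roles (binary predicates). -/
abbrev AtomicRole : Type := ℕ

/-- A role is an atomic role or its inverse. -/
inductive Role where
  | atomic : AtomicRole → Role
  | inv : AtomicRole → Role
  deriving DecidableEq

/-- A concept is an atomic concept or `∃R` for a role `R`. -/
inductive DLConcept where
  | atomic : AtomicConcept → DLConcept
  | ex : Role → DLConcept
  deriving DecidableEq

/-- TBox axioms: inclusions and disjointness axioms between concepts or roles. -/
inductive TBoxAxiom where
  | cIncl : DLConcept → DLConcept → TBoxAxiom
  | rIncl : Role → Role → TBoxAxiom
  | cDisj : DLConcept → DLConcept → TBoxAxiom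
  | rDisj : Role → Role → TBoxAxiom
  deriving DecidableEq

/-- A DL-Lite_R TBox: a finite set of TBox axioms. -/
abbrev TBox : Type := Finset TBoxAxiom

/-- A DL-Lite_core TBox: only concept inclusions and concept disjointness axioms. -/
def TBox.IsCore (T : TBox) : Prop :=
  ∀ ax ∈ T, (∃ C D, ax = TBoxAxiom.cIncl C D) ∨ (∃ C D, ax = TBoxAxiom.cDisj C D)

/-- ABox assertions. -/
inductive Assertion where
  | conceptA : AtomicConcept → Ind → Assertion
  | roleA : AtomicRole → Ind → Ind → Assertion
  deriving DecidableEq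

/-- A bag ABox: a finite bag of assertions (represented as a multiset). -/
abbrev BagABox : Type := Multiset Assertion

/-- Multiplicity of an assertion in a bag ABox, as an extended natural. -/
def BagABox.mult (A : BagABox) (s : Assertion) : ℕ∞ := (A.count s : ℕ∞)

/-- Sum of an arbitrary family of extended naturals. -/
def bagSum {α : Type*} (f : α → ℕ∞) : ℕ∞ := ⨆ s : Finset α, ∑ x ∈ s, f x

/-- A bag interpretation. -/
structure BagInterp : Type 1 where
  Δ : Type
  dne : Nonempty Δ
  indMap : Ind → Δ
  indInj : Function.Injective indMap
  cI : AtomicConcept → Δ → ℕ∞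
  rI : AtomicRole → Δ → Δ → ℕ∞

/-- Extension of the interpretation function to roles. -/
def BagInterp.roleMult (I : BagInterp) : Role → I.Δ → I.Δ → ℕ∞
  | Role.atomic P => fun u v => I.rI P u v
  | Role.inv P => fun u v => I.rI P v u

/-- Extension of the interpretation function to concepts. -/
def BagInterp.conceptMult (I : BagInterp) : DLConcept → I.Δ → ℕ∞
  | DLConcept.atomic A => fun u => I.cI A u
  | DLConcept.ex R => fun u => bagSum (fun v => I.roleMult R u v)

/-- Multiplicity of an assertion in a bag interpretation. -/
def BagInterp.assertMult (I : BagInterp) : Assertion → ℕ∞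
  | Assertion.conceptA A a => I.cI A (I.indMap a)
  | Assertion.roleA P a b => I.rI P (I.indMap a) (I.indMap b)

/-- Satisfaction of a TBox axiom by a bag interpretation. -/
def BagInterp.SatisfiesAx (I : BagInterp) : TBoxAxiom → Prop
  | TBoxAxiom.cIncl C D => ∀ u, I.conceptMult C u ≤ I.conceptMult D u
  | TBoxAxiom.rIncl R S => ∀ u v, I.roleMult R u v ≤ I.roleMult S u v
  | TBoxAxiom.cDisj C D => ∀ u, min (I.conceptMult C u) (I.conceptMult D u) = 0
  | TBoxAxiom.rDisj R S => ∀ u v, min (I.roleMult R u v) (I.roleMult S u v) = 0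

/-- A DL-Lite^bag ontology. -/
structure Ontology : Type where
  tbox : TBox
  abox : BagABox

/-- `I` is a bag model of the ontology `K`. -/
def BagInterp.IsModel (I : BagInterp) (K : Ontology) : Prop :=
  (∀ ax ∈ K.tbox, I.SatisfiesAx ax) ∧
  ∀ s : Assertion, BagABox.mult K.abox s ≤ I.assertMult s

/-- Satisfiability of an ontology under bag semantics. -/
def Ontology.Satisfiable (K : Ontology) : Prop := ∃ I : BagInterp, I.IsModel K

/- ## Conjunctive queries -/

/-- Terms: variables or individuals. -/
inductive Term where
  | var : Var → Term
  | ind : Ind → Term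
  deriving DecidableEq

def Term.varsOf : Term → List Var
  | Term.var v => [v]
  | Term.ind _ => []

def Term.indsOf : Term → List Ind
  | Term.var _ => []
  | Term.ind a => [a]

/-- Query atoms: concept atoms, role atoms, and equalities. -/
inductive QAtom where
  | conceptAt : AtomicConcept → Term → QAtom
  | roleAt : AtomicRole → Term → Term → QAtom
  | eqAt : Var → Term → QAtom
  deriving DecidableEq

def QAtom.terms : QAtom → List Term
  | QAtom.conceptAt _ t => [t]
  | QAtom.roleAt _ t₁ t₂ => [t₁, t₂]
  | QAtom.eqAt z t => [Term.var z, t]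

def QAtom.vars : QAtom → List Var
  | QAtom.conceptAt _ t => t.varsOf
  | QAtom.roleAt _ t₁ t₂ => t₁.varsOf ++ t₂.varsOf
  | QAtom.eqAt z t => z :: t.varsOf

/-- A conjunctive query `q(x) = ∃y. φ(x,y)`: a tuple of answer variables,
a tuple of existential variables, and a conjunction (list, i.e. allowing
repetitions) of atoms. -/
structure CQ : Type where
  answerVars : List Var
  existVars : List Var
  atoms : List QAtom

def CQ.vars (q : CQ) : List Var := q.answerVars ++ q.existVars

/-- Value of a term under a valuation of the variables. -/
def termVal (I : BagInterp) (f : Var → I.Δ) : Term → I.Δ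
  | Term.var v => f v
  | Term.ind a => I.indMap a

/-- Multiplicity contributed by an atom under a valuation: for predicate atoms the
multiplicity of the image tuple, for equalities the indicator of satisfaction. -/
def QAtom.mult (I : BagInterp) (f : Var → I.Δ) : QAtom → ℕ∞
  | QAtom.conceptAt A t => I.cI A (termVal I f t)
  | QAtom.roleAt P t₁ t₂ => I.rI P (termVal I f t₁) (termVal I f t₂)
  | QAtom.eqAt z t => if f z = termVal I f t then 1 else 0

/-- The bag answers `q^I(ā)`: the sum, over all valuations of the variables of `q`
mapping the answer variables to `ā` (valuations are normalized to a fixed junk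
value outside the variables of `q`), of the product of the multiplicities of the
atom occurrences of `q`. -/
def CQ.bagAnswer (q : CQ) (I : BagInterp) (a : List Ind) : ℕ∞ :=
  bagSum (fun f : {f : Var → I.Δ //
      (∀ v, v ∉ q.vars → f v = I.indMap 0) ∧
      q.answerVars.map f = a.map I.indMap} =>
    (q.atoms.map (QAtom.mult I f.1)).prod)

/-- Bag certain answers: pointwise minimum over all bag models. -/
def bagCertain (K : Ontology) (q : CQ) (a : List Ind) : ℕ∞ :=
  ⨅ (I : BagInterp) (_ : I.IsModel K), q.bagAnswer I a

/-- Base relation of the equivalence relation generated by the equality atoms. -/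
def CQ.eqBase (q : CQ) : Term → Term → Prop := fun t₁ t₂ =>
  ∃ z t, QAtom.eqAt z t ∈ q.atoms ∧ t₁ = Term.var z ∧ t₂ = t

/-- Equivalence of terms generated by the equality atoms of `q`. -/
def CQ.eqRel (q : CQ) : Term → Term → Prop := Relation.EqvGen q.eqBase

/-- Safety: the class of every variable contains a term occurring in a
non-equality atom. -/
def CQ.Safe (q : CQ) : Prop :=
  ∀ v ∈ q.vars, ∃ t : Term, ∃ atm ∈ q.atoms,
    (∀ z s, atm ≠ QAtom.eqAt z s) ∧ t ∈ QAtom.terms atm ∧ q.eqRel (Term.var v) t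

/-- Well-formedness of CQs: repetition-free disjoint tuples of variables, all
variables of the atoms among the declared variables, and safety. -/
def CQ.WellFormed (q : CQ) : Prop :=
  q.answerVars.Nodup ∧ q.existVars.Nodup ∧
  (∀ v ∈ q.answerVars, v ∉ q.existVars) ∧
  (∀ atm ∈ q.atoms, ∀ v ∈ QAtom.vars atm, v ∈ q.vars) ∧
  q.Safe

def CQ.mentionsTerm (q : CQ) (t : Term) : Prop := ∃ atm ∈ q.atoms, t ∈ QAtom.terms atm

/-- Adjacency in the Gaifman graph of `q` (on terms; equality atoms merge the
classes of their two terms, which for connectivity purposes is the same as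
making them adjacent). -/
def CQ.gaifmanAdj (q : CQ) : Term → Term → Prop := fun t₁ t₂ =>
  ∃ atm ∈ q.atoms, t₁ ∈ QAtom.terms atm ∧ t₂ ∈ QAtom.terms atm

/-- A CQ is rooted if every connected component of its Gaifman graph contains
an answer variable or an individual. -/
def CQ.Rooted (q : CQ) : Prop :=
  ∀ t : Term, q.mentionsTerm t →
    ∃ t' : Term, Relation.ReflTransGen q.gaifmanAdj t t' ∧
      ((∃ v ∈ q.answerVars, t' = Term.var v) ∨ ∃ a : Ind, t' = Term.ind a)

/- ## Set semantics -/

/-- A classical (set) interpretation. -/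
structure SetInterp : Type 1 where
  Δ : Type
  dne : Nonempty Δ
  indMap : Ind → Δ
  indInj : Function.Injective indMap
  cI : AtomicConcept → Set Δ
  rI : AtomicRole → Set (Δ × Δ)

def SetInterp.roleSet (I : SetInterp) : Role → Set (I.Δ × I.Δ)
  | Role.atomic P => I.rI P
  | Role.inv P => {p | (p.2, p.1) ∈ I.rI P}

def SetInterp.conceptSet (I : SetInterp) : DLConcept → Set I.Δ
  | DLConcept.atomic A => I.cI A
  | DLConcept.ex R => {u | ∃ v, (u, v) ∈ I.roleSet R}

def SetInterp.SatisfiesAx (I : SetInterp) : TBoxAxiom → Prop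
  | TBoxAxiom.cIncl C D => I.conceptSet C ⊆ I.conceptSet D
  | TBoxAxiom.rIncl R S => I.roleSet R ⊆ I.roleSet S
  | TBoxAxiom.cDisj C D => I.conceptSet C ∩ I.conceptSet D = ∅
  | TBoxAxiom.rDisj R S => I.roleSet R ∩ I.roleSet S = ∅

def SetInterp.SatisfiesAssertion (I : SetInterp) : Assertion → Prop
  | Assertion.conceptA A a => I.indMap a ∈ I.cI A
  | Assertion.roleA P a b => (I.indMap a, I.indMap b) ∈ I.rI P

/-- `I` is a (set) model of the TBox `T` and the set ABox `A`. -/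
def SetInterp.IsModelOf (I : SetInterp) (T : TBox) (A : Finset Assertion) : Prop :=
  (∀ ax ∈ T, I.SatisfiesAx ax) ∧ ∀ s ∈ A, I.SatisfiesAssertion s

def setTermVal (I : SetInterp) (f : Var → I.Δ) : Term → I.Δ
  | Term.var v => f v
  | Term.ind a => I.indMap a

def SetInterp.SatAtom (I : SetInterp) (f : Var → I.Δ) : QAtom → Prop
  | QAtom.conceptAt A t => setTermVal I f t ∈ I.cI A
  | QAtom.roleAt P t₁ t₂ => (setTermVal I f t₁, setTermVal I f t₂) ∈ I.rI P
  | QAtom.eqAt z t => f z = setTermVal I f t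

/-- `q(ā)` holds in the set interpretation `I`. -/
def SetInterp.SatCQ (I : SetInterp) (q : CQ) (a : List Ind) : Prop :=
  ∃ f : Var → I.Δ, q.answerVars.map f = a.map I.indMap ∧ ∀ atm ∈ q.atoms, I.SatAtom f atm

/-- Entailment of a concept inclusion from a TBox (standard set semantics). -/
def TBox.EntailsCI (T : TBox) (C D : DLConcept) : Prop :=
  ∀ I : SetInterp, (∀ ax ∈ T, I.SatisfiesAx ax) → I.conceptSet C ⊆ I.conceptSet D

/- ## The canonical bag model -/

/-- Domain elements of the canonical model: individuals and anonymous elements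
`w^j_{u,R}`. -/
inductive CanElem where
  | ind : Ind → CanElem
  | anon : CanElem → Role → ℕ → CanElem
  deriving DecidableEq

def CanElem.isAnon : CanElem → Prop
  | CanElem.ind _ => False
  | CanElem.anon _ _ _ => True

/-- A stage of the canonical-model construction: a set of active elements and
bag interpretations of the predicates. -/
structure PreInterp : Type where
  active : Set CanElem
  c : AtomicConcept → CanElem → ℕ∞
  r : AtomicRole → CanElem → CanElem → ℕ∞

def PreInterp.toInterp (P : PreInterp) : BagInterp where
  Δ := CanElem
  dne := ⟨CanElem.ind 0⟩
  indMap := CanElem.ind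
  indInj := fun a b h => by cases h; rfl
  cI := P.c
  rI := P.r

/-- Concept closure: `ccl(u,I,T)(C)` is the supremum of `C₀^I(u)` over all
concepts `C₀` with `T ⊨ C₀ ⊑ C`. -/
def cclI (T : TBox) (I : BagInterp) (C : DLConcept) (u : I.Δ) : ℕ∞ :=
  ⨆ C₀ : {C₀ : DLConcept // TBox.EntailsCI T C₀ C}, I.conceptMult C₀.1 u

def PreInterp.ccl (P : PreInterp) (T : TBox) (u : CanElem) (C : DLConcept) : ℕ∞ :=
  cclI T P.toInterp C u

/-- `δ = ccl(u,C_{i-1},T)(∃R) − (∃R)^{C_{i-1}}(u)` (truncated subtraction). -/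
def PreInterp.delta (P : PreInterp) (T : TBox) (u : CanElem) (R : Role) : ℕ∞ :=
  P.ccl T u (DLConcept.ex R) - P.toInterp.conceptMult (DLConcept.ex R) u

/-- The anonymous elements freshly added when stepping from `P`. -/
def PreInterp.NewAnon (P : PreInterp) (T : TBox) (w : CanElem) : Prop :=
  ∃ u R j, w = CanElem.anon u R j ∧ u ∈ P.active ∧ (j : ℕ∞) < P.delta T u R

/-- One step of the canonical-model construction. -/
def PreInterp.step (P : PreInterp) (T : TBox) : PreInterp where
  active := P.active ∪ {w | P.NewAnon T w}
  c := fun A u => if u ∈ P.active then P.ccl T u (DLConcept.atomic A) else 0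
  r := fun P₀ u v =>
    if u ∈ P.active ∧ v ∈ P.active then P.r P₀ u v
    else if ∃ j, v = CanElem.anon u (Role.atomic P₀) j ∧ P.NewAnon T v then 1
    else if ∃ j, u = CanElem.anon v (Role.inv P₀) j ∧ P.NewAnon T u then 1
    else 0

/-- The stages `C_i(K)` of the canonical bag model. -/
def canStage (K : Ontology) : ℕ → PreInterp
  | 0 =>
    { active := Set.range CanElem.ind
      c := fun A u =>
        match u with
        | CanElem.ind a => BagABox.mult K.abox (Assertion.conceptA A a)
        | _ => 0
      r := fun P u v =>
        match u, v with
        | CanElem.ind a, CanElem.ind b => BagABox.mult K.abox (Assertion.roleA P a b)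
        | _, _ => 0 }
  | (i + 1) => (canStage K i).step K.tbox

/-- The canonical bag model `C(K) = ⋃_{i ≥ 0} C_i(K)` (pointwise maximum). -/
def canInterp (K : Ontology) : BagInterp where
  Δ := CanElem
  dne := ⟨CanElem.ind 0⟩
  indMap := CanElem.ind
  indInj := fun a b h => by cases h; rfl
  cI := fun A u => ⨆ i, (canStage K i).c A u
  rI := fun P u v => ⨆ i, (canStage K i).r P u v

/-- The canonical bag model `C(⟨∅,A⟩)` of the ontology with empty TBox:
individuals as domain, every predicate interpreted by its ABox bag. -/
def emptyCanInterp (A : BagABox) : BagInterp where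
  Δ := Ind
  dne := ⟨0⟩
  indMap := id
  indInj := fun _ _ h => h
  cI := fun C a => BagABox.mult A (Assertion.conceptA C a)
  rI := fun P a b => BagABox.mult A (Assertion.roleA P a b)

/-- `[q,z]^{C(K)}`: bag answers over the canonical model computed only over
valuations sending the variables of `z` to anonymous elements and the remaining
existential variables to individuals. -/
def CQ.restrictedAnswer (q : CQ) (K : Ontology) (z : Finset Var) (a : List Ind) : ℕ∞ :=
  bagSum (fun f : {f : Var → CanElem //
      (∀ v, v ∉ q.vars → f v = CanElem.ind 0) ∧
      q.answerVars.map f = a.map CanElem.ind ∧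
      ∀ v ∈ q.existVars, (v ∈ z → CanElem.isAnon (f v)) ∧ (v ∉ z → ∃ b : Ind, f v = CanElem.ind b)} =>
    (q.atoms.map (QAtom.mult (canInterp K) f.1)).prod)

/- ## Ma-connected subsets, realisability, and the per-`z` rewritten query -/

/-- `t` is a variable belonging to `z`. -/
def Term.IsZVar (t : Term) (z : Finset Var) : Prop := ∃ v ∈ z, t = Term.var v

/-- Adjacency in the Gaifman graph restricted to nodes that are variables of `z`. -/
def CQ.zAdj (q : CQ) (z : Finset Var) : Term → Term → Prop := fun t₁ t₂ =>
  q.gaifmanAdj t₁ t₂ ∧ t₁.IsZVar z ∧ t₂.IsZVar z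

/-- `z'` is maximally connected in the anonymous part (ma-connected) within `z`. -/
def CQ.MAConnected (q : CQ) (z z' : Finset Var) : Prop :=
  z' ⊆ z ∧
  (∀ v ∈ z', ∀ w ∈ z, Relation.ReflTransGen (q.zAdj z) (Term.var v) (Term.var w) → w ∈ z') ∧
  (∀ v ∈ z', ∀ w ∈ z', Relation.ReflTransGen (q.zAdj z) (Term.var v) (Term.var w))

/-- `φ_{z'}`: the subconjunction of all atoms of `q` mentioning a variable of `z'`. -/
def CQ.subAtoms (q : CQ) (z' : Finset Var) : List QAtom :=
  q.atoms.filter (fun atm => decide (∃ v ∈ z', v ∈ QAtom.vars atm))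

def termsOfList (l : List QAtom) : List Term :=
  l.foldr (fun atm acc => QAtom.terms atm ++ acc) []

/-- `t_{z'}`: all terms occurring in `φ_{z'}` that are not variables of `z`. -/
def CQ.tTerms (q : CQ) (z z' : Finset Var) : List Term :=
  (termsOfList (q.subAtoms z')).filter (fun t => decide (¬ t.IsZVar z))

/-- `atm` is a legitimate choice of `α_{z'}`: an atom of `φ_{z'}` of the form
`P(t,z)` or `P(z,t)` with `z ∈ z'` and the term `t` not a variable of `z`. -/
def IsAlphaFor (q : CQ) (z z' : Finset Var) (atm : QAtom) : Prop :=
  atm ∈ q.subAtoms z' ∧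
  ((∃ P t v, v ∈ z' ∧ ¬ Term.IsZVar t z ∧ atm = QAtom.roleAt P t (Term.var v)) ∨
   (∃ P t v, v ∈ z' ∧ ¬ Term.IsZVar t z ∧ atm = QAtom.roleAt P (Term.var v) t))

def CQ.inds (q : CQ) : List Ind :=
  (termsOfList q.atoms).foldr (fun t acc => t.indsOf ++ acc) []

def CQ.maxInd (q : CQ) : Ind := q.inds.foldr max 0

/-- The individual `a` of `q^a_{z'}`: the individual among `t_{z'}` if one
exists, and a fresh individual otherwise. -/
def freshA (q : CQ) (z z' : Finset Var) : Ind :=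
  if h : ∃ c : Ind, Term.ind c ∈ q.tTerms z z' then h.choose else q.maxInd + 1

/-- A fresh individual `b` (distinct from `freshA`). -/
def freshB (q : CQ) : Ind := q.maxInd + 2

/-- The one-assertion bag ABox `A'` used to test realisability: `{P(a,b)}` if
`α_{z'} = P(t,z)` and `{P(b,a)}` if `α_{z'} = P(z,t)`. -/
def alphaABox (z' : Finset Var) (atm : QAtom) (a b : Ind) : BagABox :=
  match atm with
  | QAtom.roleAt P _ t₂ =>
      if Term.IsZVar t₂ z' then {Assertion.roleA P a b} else {Assertion.roleA P b a}
  | _ => 0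

def subVars (q : CQ) (z' : Finset Var) : List Var :=
  (q.subAtoms z').foldr (fun atm acc => QAtom.vars atm ++ acc) []

/-- The bag answer `(q^a_{z'})^{C(⟨T,A'⟩)}(⟨⟩)` of the Boolean query
`q^a_{z'}() = ∃x'.∃z'. φ_{z'} ∧ ⋀_{t ∈ t_{z'}}(t = a) ∧ ⋀_{z ∈ z'}(z ≠ a)`
over the canonical model of `⟨T,A'⟩`. -/
def realQAnswer (T : TBox) (q : CQ) (z z' : Finset Var) (atm : QAtom) : ℕ∞ :=
  bagSum (fun f : {f : Var → CanElem //
      (∀ v, v ∉ subVars q z' → f v = CanElem.ind 0) ∧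
      (∀ t ∈ q.tTerms z z',
        termVal (canInterp ⟨T, alphaABox z' atm (freshA q z z') (freshB q)⟩) f t
          = CanElem.ind (freshA q z z')) ∧
      ∀ v ∈ z', f v ≠ CanElem.ind (freshA q z z')} =>
    ((q.subAtoms z').map
      (QAtom.mult (canInterp ⟨T, alphaABox z' atm (freshA q z z') (freshB q)⟩) f.1)).prod)

/-- Equality-consistency of `z`: no equality atom `z = t` with `z ∈ z` and `t ∉ z`. -/
def EqConsistent (q : CQ) (z : Finset Var) : Prop :=
  ∀ v t, QAtom.eqAt v t ∈ q.atoms → v ∈ z → Term.IsZVar t z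

/-- The ma-connected subset `z'` is realisable by `T` (w.r.t. the chosen `α_{z'}`). -/
def RealisableMA (T : TBox) (q : CQ) (z z' : Finset Var) (atm : QAtom) : Prop :=
  1 ≤ realQAnswer T q z z' atm

/-- `z` is realisable by `T`: equality-consistent and every nonempty
ma-connected subset of `z` is realisable. -/
def RealisableZ (T : TBox) (q : CQ) (z : Finset Var) (alpha : Finset Var → QAtom) : Prop :=
  EqConsistent q z ∧
  ∀ z' : Finset Var, q.MAConnected z z' → z'.Nonempty → RealisableMA T q z z' (alpha z')

/-- The nonempty ma-connected subsets of `z`. -/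
def maSets (q : CQ) (z : Finset Var) : Finset (Finset Var) :=
  z.powerset.filter (fun z' => q.MAConnected z z' ∧ z'.Nonempty)

def tTermVars (q : CQ) (z z' : Finset Var) : List Var :=
  (q.tTerms z z').foldr (fun t acc => Term.varsOf t ++ acc) []

/-- The equalities identifying all the terms of `t_{z'}`. -/
def eqAtomsFor (q : CQ) (z z' : Finset Var) : List QAtom :=
  (tTermVars q z z').foldr
    (fun v acc => ((q.tTerms z z').map (fun t => QAtom.eqAt v t)) ++ acc) []

/-- Atoms of `q_z`: the atoms of `q` not mentioning a variable of `z`, plus,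
for each nonempty ma-connected `z' ⊆ z`, the atom `α_{z'}` together with the
equalities identifying the terms of `t_{z'}`. -/
def qzAtoms (q : CQ) (z : Finset Var) (alpha : Finset Var → QAtom) : List QAtom :=
  q.atoms.filter (fun atm => decide (¬ ∃ v ∈ z, v ∈ QAtom.vars atm))
    ++ (maSets q z).toList.foldr (fun z' acc => alpha z' :: (eqAtomsFor q z z' ++ acc)) []

/-- The CQ `q_z(x) = ∃y'. φ_z(x,y')`. -/
def qz (q : CQ) (z : Finset Var) (alpha : Finset Var → QAtom) : CQ where
  answerVars := q.answerVars
  existVars := q.existVars.filter (fun v => decide (∃ atm ∈ qzAtoms q z alpha, v ∈ QAtom.vars atm))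
  atoms := qzAtoms q z alpha

/- ## The BALG rewriting `q̄` -/

/-- Value of an atom of `q_z` after the rewriting step 3 (`chasing back'' with
the TBox): concept atoms `A(t)` become `⋁_{T ⊨ C ⊑ A} ζ_C(t)`, role atoms with a
`z`-variable become the corresponding truncated difference, and the remaining
atoms are evaluated as before. -/
def rewAtomVal (T : TBox) (I : BagInterp) (z : Finset Var) (f : Var → I.Δ) : QAtom → ℕ∞
  | QAtom.conceptAt A t => cclI T I (DLConcept.atomic A) (termVal I f t)
  | QAtom.roleAt P t₁ t₂ =>
      if Term.IsZVar t₂ z then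
        cclI T I (DLConcept.ex (Role.atomic P)) (termVal I f t₁)
          - I.conceptMult (DLConcept.ex (Role.atomic P)) (termVal I f t₁)
      else if Term.IsZVar t₁ z then
        cclI T I (DLConcept.ex (Role.inv P)) (termVal I f t₂)
          - I.conceptMult (DLConcept.ex (Role.inv P)) (termVal I f t₂)
      else I.rI P (termVal I f t₁) (termVal I f t₂)
  | QAtom.eqAt v t => if f v = termVal I f t then 1 else 0

/-- Bag answers of the BALG query `q̄_z`, obtained from `q_z` by projecting only
the variables of `y' ∖ z` and replacing atoms as in `rewAtomVal`. -/
def rewAnswer (T : TBox) (qq : CQ) (z : Finset Var) (I : BagInterp) (a : List Ind) : ℕ∞ :=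
  bagSum (fun f : {f : Var → I.Δ //
      (∀ v, v ∉ qq.answerVars ++ qq.existVars.filter (fun u => decide (u ∉ z)) →
        f v = I.indMap 0) ∧
      qq.answerVars.map f = a.map I.indMap} =>
    (qq.atoms.map (rewAtomVal T I z f.1)).prod)

/- ## BALG¹_ε queries -/

def Term.fvars (t : Term) : Finset Var :=
  match t with
  | Term.var v => {v}
  | Term.ind _ => ∅

/-- Syntax of BALG¹_ε queries. -/
inductive BQuery where
  | atomC : AtomicConcept → Term → BQuery
  | atomR : AtomicRole → Term → Term → BQuery
  | conj : BQuery → BQuery → BQuery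
  | eqSel : BQuery → Var → Term → BQuery
  | proj : List Var → BQuery → BQuery
  | maxU : BQuery → BQuery → BQuery
  | arithU : BQuery → BQuery → BQuery
  | diff : BQuery → BQuery → BQuery

/-- Answer variables of a BALG¹_ε query. -/
def BQuery.fv : BQuery → Finset Var
  | BQuery.atomC _ t => t.fvars
  | BQuery.atomR _ t₁ t₂ => t₁.fvars ∪ t₂.fvars
  | BQuery.conj q₁ q₂ => q₁.fv ∪ q₂.fv
  | BQuery.eqSel q _ t => q.fv ∪ t.fvars
  | BQuery.proj ys q => q.fv \ ys.toFinset
  | BQuery.maxU q₁ _ => q₁.fv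
  | BQuery.arithU q₁ _ => q₁.fv
  | BQuery.diff q₁ _ => q₁.fv

/-- Well-formedness of BALG¹_ε queries. -/
def BQuery.WF : BQuery → Prop
  | BQuery.atomC _ _ => True
  | BQuery.atomR _ _ _ => True
  | BQuery.conj q₁ q₂ => q₁.WF ∧ q₂.WF
  | BQuery.eqSel q x _ => q.WF ∧ x ∈ q.fv
  | BQuery.proj _ q => q.WF
  | BQuery.maxU q₁ q₂ => q₁.WF ∧ q₂.WF ∧ q₁.fv = q₂.fv
  | BQuery.arithU q₁ q₂ => q₁.WF ∧ q₂.WF ∧ q₁.fv = q₂.fv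
  | BQuery.diff q₁ q₂ => q₁.WF ∧ q₂.WF ∧ q₁.fv = q₂.fv

/-- Semantics of BALG¹_ε queries under a valuation of the answer variables. -/
def BQuery.val (I : BagInterp) : BQuery → (Var → I.Δ) → ℕ∞
  | BQuery.atomC A t, f => I.cI A (termVal I f t)
  | BQuery.atomR P t₁ t₂, f => I.rI P (termVal I f t₁) (termVal I f t₂)
  | BQuery.conj q₁ q₂, f => q₁.val I f * q₂.val I f
  | BQuery.eqSel q x t, f => if f x = termVal I f t then q.val I f else 0
  | BQuery.proj ys q, f => bagSum (fun g : {g : Var → I.Δ // ∀ v, v ∉ ys → g v = f v} => q.val I g.1)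
  | BQuery.maxU q₁ q₂, f => max (q₁.val I f) (q₂.val I f)
  | BQuery.arithU q₁ q₂, f => q₁.val I f + q₂.val I f
  | BQuery.diff q₁ q₂, f => q₁.val I f - q₂.val I f

/-- Bag answers of a BALG¹_ε query with answer variables `xs` on a tuple `a`. -/
def BQuery.answer (Q : BQuery) (xs : List Var) (I : BagInterp) (a : List Ind) : ℕ∞ :=
  if a.length = xs.length then Q.val I (fun v => I.indMap (a.getD (xs.idxOf v) 0)) else 0

/- ## Enumerated bags, e-homomorphisms, and e-valuations -/

/-- Enumerated copies of a bag of domain elements (for an atomic concept). -/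
def EBagC (I : BagInterp) (A : AtomicConcept) : Type :=
  {p : I.Δ × ℕ // 1 ≤ p.2 ∧ (p.2 : ℕ∞) ≤ I.cI A p.1}

/-- Enumerated copies of a bag of pairs (for an atomic role). -/
def EBagR (I : BagInterp) (P : AtomicRole) : Type :=
  {p : (I.Δ × I.Δ) × ℕ // 1 ≤ p.2 ∧ (p.2 : ℕ∞) ≤ I.rI P p.1.1 p.1.2}

/-- An e-homomorphism between the enumerated versions of two bag interpretations. -/
structure EHom (I J : BagInterp) where
  h : I.Δ → J.Δ
  hInd : ∀ a : Ind, h (I.indMap a) = J.indMap a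
  hC : ∀ A : AtomicConcept, EBagC I A → EBagC J A
  hC_fst : ∀ (A : AtomicConcept) (x : EBagC I A), (hC A x).1.1 = h x.1.1
  hR : ∀ P : AtomicRole, EBagR I P → EBagR J P
  hR_fst : ∀ (P : AtomicRole) (x : EBagR I P), (hR P x).1.1 = (h x.1.1.1, h x.1.1.2)

/-- Predicate-injectivity on individuals of an e-homomorphism. -/
def EHom.PredInj {I J : BagInterp} (e : EHom I J) : Prop :=
  ∀ u : I.Δ, (∃ a : Ind, e.h u = J.indMap a) →
    (∀ A : AtomicConcept, ∀ x y : EBagC I A,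
      x.1.1 = u → y.1.1 = u → x.1.2 ≠ y.1.2 → e.hC A x ≠ e.hC A y) ∧
    (∀ P : AtomicRole, ∀ x y : EBagR I P, x.1.1.1 = u → y.1.1.1 = u →
      (x.1.1.2, x.1.2) ≠ (y.1.1.2, y.1.2) → e.hR P x ≠ e.hR P y) ∧
    (∀ P : AtomicRole, ∀ x y : EBagR I P, x.1.1.2 = u → y.1.1.2 = u →
      (x.1.1.1, x.1.2) ≠ (y.1.1.1, y.1.2) → e.hR P x ≠ e.hR P y)

/-- Enumerated atoms of a CQ (seen as a bag of atoms). -/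
def EAtom (q : CQ) : Type := {p : QAtom × ℕ // 1 ≤ p.2 ∧ p.2 ≤ q.atoms.count p.1}

/-- An e-valuation of the enumerated query `q^e` over the enumerated
interpretation `I^e`. -/
structure EVal (q : CQ) (I : BagInterp) where
  ν : Var → I.Δ
  hjunk : ∀ v, v ∉ q.vars → ν v = I.indMap 0
  heq : ∀ z t, QAtom.eqAt z t ∈ q.atoms → ν z = termVal I ν t
  ℓ : EAtom q → ℕ
  hone : ∀ e : EAtom q, 1 ≤ ℓ e
  hconcept : ∀ (e : EAtom q) (A : AtomicConcept) (t : Term),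
    e.1.1 = QAtom.conceptAt A t → (ℓ e : ℕ∞) ≤ I.cI A (termVal I ν t)
  hrole : ∀ (e : EAtom q) (P : AtomicRole) (t₁ t₂ : Term),
    e.1.1 = QAtom.roleAt P t₁ t₂ → (ℓ e : ℕ∞) ≤ I.rI P (termVal I ν t₁) (termVal I ν t₂)
  heqm : ∀ (e : EAtom q) (z : Var) (t : Term), e.1.1 = QAtom.eqAt z t → ℓ e = 1

/-- The tuple of domain elements to which an e-atom is sent by an e-valuation. -/
def EVal.imgTerms {q : CQ} {I : BagInterp} (ev : EVal q I) (e : EAtom q) : List I.Δ :=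
  (QAtom.terms e.1.1).map (termVal I ev.ν)

/-- The enumerated image of an e-atom under an e-valuation. -/
def EVal.img {q : CQ} {I : BagInterp} (ev : EVal q I) (e : EAtom q) : List I.Δ × ℕ :=
  (ev.imgTerms e, ev.ℓ e)

/- ## Auxiliary concrete queries -/

/-- The CQ `ζ_C(x)`: `A(x)`, `∃y.P(x,y)` or `∃y.P(y,x)`. -/
def zetaCQ : DLConcept → CQ
  | DLConcept.atomic A => ⟨[0], [], [QAtom.conceptAt A (Term.var 0)]⟩
  | DLConcept.ex (Role.atomic P) => ⟨[0], [1], [QAtom.roleAt P (Term.var 0) (Term.var 1)]⟩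
  | DLConcept.ex (Role.inv P) => ⟨[0], [1], [QAtom.roleAt P (Term.var 1) (Term.var 0)]⟩

/-- The CQ `q(x) = R(x,x)`. -/
def selfCQ (P : AtomicRole) : CQ := ⟨[0], [], [QAtom.roleAt P (Term.var 0) (Term.var 0)]⟩

/-!
Each step of the construction saturates the elements present before it: for `u` in `C_i`,
`(∃R)^{C_{i+1}}(u) = ccl(u, C_i, T)(∃R)` and the concept closure of `u` no longer changes, so
`u` receives anonymous children only in the step right after it appears. Hence an element of
depth `d` (individuals have depth 0, a child one more than its parent) is present in `C_d`, its
concept multiplicities are final in `C_{d+1}`, and a role multiplicity is final as soon as both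
ends are present. A valuation of positive weight sends every role atom to a pair of individuals
or to a parent and its child, so, the query being rooted, a shortest path to a root bounds the
depth of every term by the number `m` of atoms that are not loops of the Gaifman graph. Since
`m ≤ n`, and `m < n` as soon as there is a concept atom, `C_n` evaluates every atom as `C(K)`.
-/

lemma le_bagSum {α : Type*} (f : α → ℕ∞) (s : Finset α) : ∑ x ∈ s, f x ≤ bagSum f :=
  le_iSup (fun s : Finset α => ∑ x ∈ s, f x) s

lemma bagSum_le {α : Type*} {f : α → ℕ∞} {c : ℕ∞} (h : ∀ s : Finset α, ∑ x ∈ s, f x ≤ c) :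
    bagSum f ≤ c :=
  iSup_le h

lemma bagSum_add {α : Type*} (f g : α → ℕ∞) :
    bagSum (fun x => f x + g x) = bagSum f + bagSum g := by
  rw [bagSum, bagSum, bagSum, ENat.iSup_add_iSup fun s t => ⟨s ∪ t, add_le_add
    (Finset.sum_le_sum_of_subset Finset.subset_union_left)
    (Finset.sum_le_sum_of_subset Finset.subset_union_right)⟩]
  simp only [Finset.sum_add_distrib]

lemma bagSum_eq_bagSum_comp {α β : Type*} {e : α → β} (he : Function.Injective e)
    {f : β → ℕ∞} (hf : ∀ b ∉ Set.range e, f b = 0) :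
    bagSum f = bagSum (f ∘ e) := by
  apply le_antisymm
  · refine bagSum_le fun s => ?_
    rw [← Finset.sum_preimage e s he.injOn f fun b _ hb => hf b hb]
    exact le_bagSum _ _
  · refine bagSum_le fun s => ?_
    rw [Function.comp_def, ← Finset.sum_image fun x _ y _ h => he h]
    exact le_bagSum _ _

lemma bagSum_ite_lt (δ : ℕ∞) : bagSum (fun j : ℕ => if (j : ℕ∞) < δ then 1 else 0) = δ := by
  apply le_antisymm
  · refine bagSum_le fun s => ?_
    rw [Finset.sum_boole]
    cases δ with
    | top => exact le_top
    | coe m =>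
      have hsub : ({j ∈ s | (j : ℕ∞) < m} : Finset ℕ) ⊆ Finset.range m := fun j hj =>
        Finset.mem_range.2 (Nat.cast_lt.1 (Finset.mem_filter.1 hj).2)
      exact_mod_cast (Finset.card_le_card hsub).trans (Finset.card_range m).le
  · refine ENat.forall_natCast_le_iff_le.1 fun m hm => (le_bagSum _ (Finset.range m)).trans' ?_
    rw [Finset.sum_boole, Finset.filter_true_of_mem fun j hj =>
      (Nat.cast_lt.2 (Finset.mem_range.1 hj)).trans_le hm, Finset.card_range]

lemma iSup_eq_of_monotone_of_forall_ge {α : Type*} [CompleteLattice α] {f : ℕ → α}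
    (hf : Monotone f) {i : ℕ} (h : ∀ j, i ≤ j → f j = f i) : ⨆ j, f j = f i :=
  le_antisymm (iSup_le fun j => (le_total j i).elim (fun hj => hf hj) fun hj => (h j hj).le)
    (le_iSup f i)

lemma TBox.EntailsCI.refl (T : TBox) (C : DLConcept) : T.EntailsCI C C := fun _ _ => subset_rfl

lemma TBox.EntailsCI.trans {T : TBox} {C D E : DLConcept} (h₁ : T.EntailsCI C D)
    (h₂ : T.EntailsCI D E) : T.EntailsCI C E :=
  fun I hI => (h₁ I hI).trans (h₂ I hI)

lemma le_cclI (T : TBox) (I : BagInterp) (C : DLConcept) (u : I.Δ) :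
    I.conceptMult C u ≤ cclI T I C u :=
  le_iSup (fun C₀ : {C₀ // T.EntailsCI C₀ C} => I.conceptMult C₀.1 u) ⟨C, .refl T C⟩

lemma iSup_cclI (T : TBox) (I : BagInterp) (C : DLConcept) (u : I.Δ) :
    ⨆ C₀ : {C₀ // T.EntailsCI C₀ C}, cclI T I C₀.1 u = cclI T I C u := by
  refine le_antisymm (iSup_le fun C₀ => iSup_le fun C₁ => ?_) ?_
  · exact le_iSup (fun C₂ : {C₂ // T.EntailsCI C₂ C} => I.conceptMult C₂.1 u)
      ⟨C₁.1, C₁.2.trans C₀.2⟩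
  · exact le_iSup (fun C₀ : {C₀ // T.EntailsCI C₀ C} => cclI T I C₀.1 u) ⟨C, .refl T C⟩

namespace PreInterp

variable (P : PreInterp) (T : TBox)

def SupportedOnActive : Prop :=
  (∀ A u, P.c A u ≠ 0 → u ∈ P.active) ∧
    ∀ Q u v, P.r Q u v ≠ 0 → u ∈ P.active ∧ v ∈ P.active

variable {P T}

lemma newAnon_anon_iff {u : CanElem} {R : Role} {j : ℕ} :
    P.NewAnon T (CanElem.anon u R j) ↔ u ∈ P.active ∧ (j : ℕ∞) < P.delta T u R := by
  simp [NewAnon]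

lemma SupportedOnActive.roleMult_eq_zero (hP : P.SupportedOnActive) {R : Role} {u v : CanElem}
    (huv : ¬ (u ∈ P.active ∧ v ∈ P.active)) : P.toInterp.roleMult R u v = 0 := by
  cases R with
  | atomic Q => exact not_imp_comm.1 (hP.2 Q u v) huv
  | inv Q => exact not_imp_comm.1 (hP.2 Q v u) (huv ∘ And.symm)

lemma roleMult_step_of_mem {R : Role} {u v : CanElem} (hu : u ∈ P.active) (hv : v ∈ P.active) :
    (P.step T).toInterp.roleMult R u v = P.toInterp.roleMult R u v := by
  cases R <;> simp [BagInterp.roleMult, toInterp, step, hu, hv]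

lemma exists_anon_and_newAnon_iff {u v : CanElem} {R : Role} (hu : u ∈ P.active) :
    (∃ j, v = CanElem.anon u R j ∧ P.NewAnon T v) ↔
      ∃ j : ℕ, v = CanElem.anon u R j ∧ (j : ℕ∞) < P.delta T u R := by
  refine exists_congr fun j => and_congr_right fun hv => ?_
  rw [hv, newAnon_anon_iff, and_iff_right hu]

lemma not_exists_anon_and_newAnon {u v : CanElem} {R : Role} (hv : v ∉ P.active) :
    ¬ ∃ j, u = CanElem.anon v R j ∧ P.NewAnon T u := by
  rintro ⟨j, rfl, h⟩
  exact hv (newAnon_anon_iff.1 h).1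

lemma roleMult_step_of_not_mem {R : Role} {u v : CanElem} (hu : u ∈ P.active)
    (hv : v ∉ P.active) :
    (P.step T).toInterp.roleMult R u v =
      if ∃ j : ℕ, v = CanElem.anon u R j ∧ (j : ℕ∞) < P.delta T u R then 1 else 0 := by
  cases R <;> simp only [BagInterp.roleMult, toInterp, step, hu, hv, and_false, and_true,
    if_false, exists_anon_and_newAnon_iff hu, not_exists_anon_and_newAnon hv]

lemma supportedOnActive_step : (P.step T).SupportedOnActive := by
  refine ⟨fun A u h => ?_, fun Q u v h => ?_⟩
  · by_cases hu : u ∈ P.active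
    · exact Or.inl hu
    · simp [PreInterp.step, hu] at h
  · simp only [PreInterp.step] at h
    split_ifs at h with h₁ h₂ h₃
    · exact ⟨Or.inl h₁.1, Or.inl h₁.2⟩
    · obtain ⟨j, rfl, hnew⟩ := h₂
      exact ⟨Or.inl (newAnon_anon_iff.1 hnew).1, Or.inr hnew⟩
    · obtain ⟨j, rfl, hnew⟩ := h₃
      exact ⟨Or.inr hnew, Or.inl (newAnon_anon_iff.1 hnew).1⟩
    · exact absurd rfl h

lemma exMult_step (hP : P.SupportedOnActive) {u : CanElem} {R : Role} (hu : u ∈ P.active)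
    (hfresh : ∀ j : ℕ, (j : ℕ∞) < P.delta T u R → CanElem.anon u R j ∉ P.active) :
    (P.step T).toInterp.conceptMult (DLConcept.ex R) u = P.ccl T u (DLConcept.ex R) := by
  have hsplit : ∀ v : CanElem, (P.step T).toInterp.roleMult R u v = P.toInterp.roleMult R u v +
      if ∃ j : ℕ, v = CanElem.anon u R j ∧ (j : ℕ∞) < P.delta T u R then 1 else 0 := by
    intro v
    by_cases hv : v ∈ P.active
    · rw [roleMult_step_of_mem hu hv, if_neg, add_zero]
      rintro ⟨j, rfl, hj⟩
      exact hfresh j hj hv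
    · rw [roleMult_step_of_not_mem hu hv, hP.roleMult_eq_zero fun h => hv h.2, zero_add]
  have hchildren : bagSum (fun v =>
      if ∃ j : ℕ, v = CanElem.anon u R j ∧ (j : ℕ∞) < P.delta T u R then (1 : ℕ∞) else 0)
      = P.delta T u R := by
    rw [bagSum_eq_bagSum_comp (e := CanElem.anon u R) (fun _ _ h => by injection h)]
    · simpa [Function.comp_def] using bagSum_ite_lt (P.delta T u R)
    · rintro v hv
      rw [if_neg]
      rintro ⟨j, rfl, -⟩
      exact hv ⟨j, rfl⟩
  calc (P.step T).toInterp.conceptMult (DLConcept.ex R) u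
      = bagSum fun v => P.toInterp.roleMult R u v +
          if ∃ j : ℕ, v = CanElem.anon u R j ∧ (j : ℕ∞) < P.delta T u R then 1 else 0 :=
        congrArg bagSum (funext hsplit)
    _ = P.toInterp.conceptMult (DLConcept.ex R) u + P.delta T u R := by
        rw [bagSum_add]
        exact congrArg (_ + ·) hchildren
    _ = P.ccl T u (DLConcept.ex R) := add_tsub_cancel_of_le (le_cclI _ _ _ _)

lemma ccl_step (hP : P.SupportedOnActive) {u : CanElem} (hu : u ∈ P.active)
    (hfresh : ∀ (R : Role) (j : ℕ), (j : ℕ∞) < P.delta T u R → CanElem.anon u R j ∉ P.active)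
    (C : DLConcept) : (P.step T).ccl T u C = P.ccl T u C := by
  have hmult : ∀ C₀, (P.step T).toInterp.conceptMult C₀ u = P.ccl T u C₀ := by
    rintro (A | R)
    · simp [BagInterp.conceptMult, toInterp, PreInterp.step, hu]
    · exact exMult_step hP hu (hfresh R)
  simp only [ccl, cclI, hmult]
  exact iSup_cclI T P.toInterp C u

lemma delta_step_eq_zero (hP : P.SupportedOnActive) {u : CanElem} (hu : u ∈ P.active)
    (hfresh : ∀ (R : Role) (j : ℕ), (j : ℕ∞) < P.delta T u R → CanElem.anon u R j ∉ P.active)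
    (R : Role) : (P.step T).delta T u R = 0 := by
  rw [delta, ccl_step hP hu hfresh, exMult_step hP hu (hfresh R), tsub_self]

end PreInterp

def CanElem.depth : CanElem → ℕ
  | CanElem.ind _ => 0
  | CanElem.anon u _ _ => u.depth + 1

section CanonicalStages

variable (K : Ontology)

lemma canStage_supportedOnActive : ∀ i, (canStage K i).SupportedOnActive
  | 0 => by
    refine ⟨fun A u h => ?_, fun Q u v h => ?_⟩
    · cases u with
      | ind a => exact ⟨a, rfl⟩
      | anon => exact absurd rfl h
    · cases u with
      | ind a =>
        cases v with
        | ind b => exact ⟨⟨a, rfl⟩, ⟨b, rfl⟩⟩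
        | anon => exact absurd rfl h
      | anon => exact absurd rfl h
  | _ + 1 => PreInterp.supportedOnActive_step

lemma canStage_active_mono : Monotone fun i => (canStage K i).active :=
  monotone_nat_of_le_succ fun _ => Set.subset_union_left

variable {K}

lemma exists_lt_of_anon_mem_active {u : CanElem} {R : Role} {j : ℕ} :
    ∀ {i}, CanElem.anon u R j ∈ (canStage K i).active →
      ∃ m < i, u ∈ (canStage K m).active ∧ (j : ℕ∞) < (canStage K m).delta K.tbox u R
  | 0, ⟨_, h⟩ => CanElem.noConfusion h
  | _ + 1, Or.inl h =>
    let ⟨m, hm, h'⟩ := exists_lt_of_anon_mem_active h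
    ⟨m, hm.trans (Nat.lt_succ_self _), h'⟩
  | i + 1, Or.inr h => ⟨i, Nat.lt_succ_self i, PreInterp.newAnon_anon_iff.1 h⟩

lemma canStage_fresh : ∀ (i : ℕ) {u : CanElem}, u ∈ (canStage K i).active →
    ∀ (R : Role) (j : ℕ), (j : ℕ∞) < (canStage K i).delta K.tbox u R →
      CanElem.anon u R j ∉ (canStage K i).active
  | 0, _, _, _, _, _, h => by
    obtain ⟨m, hm, -⟩ := exists_lt_of_anon_mem_active h
    exact Nat.not_lt_zero m hm
  | i + 1, u, hu, R, j, hj, h => by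
    by_cases hu' : u ∈ (canStage K i).active
    -- an element already present at stage `i` was saturated by the last step
    · rw [show canStage K (i + 1) = (canStage K i).step K.tbox from rfl,
        PreInterp.delta_step_eq_zero (canStage_supportedOnActive K i) hu'
          (canStage_fresh i hu')] at hj
      exact not_lt_zero hj
    · obtain ⟨m, hm, hum, -⟩ := exists_lt_of_anon_mem_active h
      exact hu' (canStage_active_mono K (Nat.le_of_lt_succ hm) hum)

lemma canStage_ccl_succ {i : ℕ} {u : CanElem} (hu : u ∈ (canStage K i).active) (C : DLConcept) :
    (canStage K (i + 1)).ccl K.tbox u C = (canStage K i).ccl K.tbox u C :=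
  PreInterp.ccl_step (canStage_supportedOnActive K i) hu (canStage_fresh i hu) C

lemma canStage_delta_succ {i : ℕ} {u : CanElem} (hu : u ∈ (canStage K i).active) (R : Role) :
    (canStage K (i + 1)).delta K.tbox u R = 0 :=
  PreInterp.delta_step_eq_zero (canStage_supportedOnActive K i) hu (canStage_fresh i hu) R

lemma mem_active_depth : ∀ {u : CanElem} {i : ℕ}, u ∈ (canStage K i).active →
    u ∈ (canStage K u.depth).active
  | CanElem.ind a, _, _ => ⟨a, rfl⟩
  | CanElem.anon p R j, _, h => by
    obtain ⟨m, -, hp, hj⟩ := exists_lt_of_anon_mem_active h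
    have hm : m ≤ p.depth := by
      by_contra! hlt
      obtain ⟨k, rfl⟩ : ∃ k, m = k + 1 := ⟨m - 1, by omega⟩
      rw [canStage_delta_succ (canStage_active_mono K (by omega) (mem_active_depth hp))] at hj
      exact not_lt_zero hj
    exact canStage_active_mono K (Nat.succ_le_succ hm)
      (Or.inr (PreInterp.newAnon_anon_iff.2 ⟨hp, hj⟩))

lemma canStage_ccl_of_le {i j : ℕ} {u : CanElem} (hu : u ∈ (canStage K i).active) (hij : i ≤ j)
    (C : DLConcept) : (canStage K j).ccl K.tbox u C = (canStage K i).ccl K.tbox u C := by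
  induction j, hij using Nat.le_induction with
  | base => rfl
  | succ j hij ih => rw [canStage_ccl_succ (canStage_active_mono K hij hu), ih]

lemma canStage_c_succ (i : ℕ) (A : AtomicConcept) (u : CanElem) :
    (canStage K (i + 1)).c A u =
      if u ∈ (canStage K i).active then (canStage K i).ccl K.tbox u (DLConcept.atomic A) else 0 :=
  rfl

lemma canStage_c_mono (A : AtomicConcept) (u : CanElem) :
    Monotone fun i => (canStage K i).c A u := by
  refine monotone_nat_of_le_succ fun i => ?_
  by_cases hu : u ∈ (canStage K i).active
  · rw [canStage_c_succ, if_pos hu]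
    exact le_cclI K.tbox (canStage K i).toInterp (DLConcept.atomic A) u
  · rw [not_imp_comm.1 ((canStage_supportedOnActive K i).1 A u) hu]
    exact zero_le

lemma canStage_r_of_le {i j : ℕ} {u v : CanElem} (hu : u ∈ (canStage K i).active)
    (hv : v ∈ (canStage K i).active) (hij : i ≤ j) (Q : AtomicRole) :
    (canStage K j).r Q u v = (canStage K i).r Q u v := by
  induction j, hij using Nat.le_induction with
  | base => rfl
  | succ j hij ih =>
    rw [← ih]
    exact if_pos ⟨canStage_active_mono K hij hu, canStage_active_mono K hij hv⟩

lemma canStage_r_mono (Q : AtomicRole) (u v : CanElem) :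
    Monotone fun i => (canStage K i).r Q u v := by
  refine monotone_nat_of_le_succ fun i => ?_
  by_cases huv : u ∈ (canStage K i).active ∧ v ∈ (canStage K i).active
  · exact (canStage_r_of_le huv.1 huv.2 (Nat.le_succ i) Q).ge
  · rw [not_imp_comm.1 ((canStage_supportedOnActive K i).2 Q u v) huv]
    exact zero_le

lemma canInterp_cI_eq {i j : ℕ} {u : CanElem} (hu : u ∈ (canStage K i).active) (hij : i < j)
    (A : AtomicConcept) : (canInterp K).cI A u = (canStage K j).c A u := by
  refine iSup_eq_of_monotone_of_forall_ge (canStage_c_mono A u) fun k hjk => ?_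
  obtain ⟨j, rfl⟩ : ∃ j', j = j' + 1 := ⟨j - 1, by omega⟩
  obtain ⟨k, rfl⟩ : ∃ k', k = k' + 1 := ⟨k - 1, by omega⟩
  simp only [canStage_c_succ, canStage_active_mono K (Nat.le_of_lt_succ hij) hu,
    canStage_active_mono K (by omega : i ≤ k) hu, if_true,
    canStage_ccl_of_le hu (Nat.le_of_lt_succ hij), canStage_ccl_of_le hu (by omega : i ≤ k)]

lemma canInterp_rI_eq {i j : ℕ} {u v : CanElem} (hu : u ∈ (canStage K i).active)
    (hv : v ∈ (canStage K i).active) (hij : i ≤ j) (Q : AtomicRole) :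
    (canInterp K).rI Q u v = (canStage K j).r Q u v :=
  iSup_eq_of_monotone_of_forall_ge (canStage_r_mono Q u v) fun k hjk => by
    rw [canStage_r_of_le hu hv (hij.trans hjk), canStage_r_of_le hu hv hij]

lemma exists_mem_active_of_cI_ne_zero {A : AtomicConcept} {u : CanElem}
    (h : (canInterp K).cI A u ≠ 0) : ∃ i, u ∈ (canStage K i).active := by
  obtain ⟨i, hi⟩ := not_forall.1 (mt ENat.iSup_eq_zero.2 h)
  exact ⟨i, (canStage_supportedOnActive K i).1 A u hi⟩

lemma exists_mem_active_of_rI_ne_zero {Q : AtomicRole} {u v : CanElem}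
    (h : (canInterp K).rI Q u v ≠ 0) :
    ∃ i, u ∈ (canStage K i).active ∧ v ∈ (canStage K i).active := by
  obtain ⟨i, hi⟩ := not_forall.1 (mt ENat.iSup_eq_zero.2 h)
  exact ⟨i, (canStage_supportedOnActive K i).2 Q u v hi⟩

lemma depth_le_of_canStage_r_ne_zero {Q : AtomicRole} {u v : CanElem} :
    ∀ {i : ℕ}, (canStage K i).r Q u v ≠ 0 → u.depth ≤ v.depth + 1 ∧ v.depth ≤ u.depth + 1
  | 0, h => by
    cases u with
    | ind a =>
      cases v with
      | ind b => simp [CanElem.depth]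
      | anon => exact absurd rfl h
    | anon => exact absurd rfl h
  | i + 1, h => by
    simp only [canStage, PreInterp.step] at h
    split_ifs at h with h₁ h₂ h₃
    · exact depth_le_of_canStage_r_ne_zero h
    · obtain ⟨j, rfl, -⟩ := h₂
      simp only [CanElem.depth]
      omega
    · obtain ⟨j, rfl, -⟩ := h₃
      simp only [CanElem.depth]
      omega
    · exact absurd rfl h

lemma depth_le_of_rI_ne_zero {Q : AtomicRole} {u v : CanElem} (h : (canInterp K).rI Q u v ≠ 0) :
    u.depth ≤ v.depth + 1 ∧ v.depth ≤ u.depth + 1 := by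
  obtain ⟨i, hi⟩ := not_forall.1 (mt ENat.iSup_eq_zero.2 h)
  exact depth_le_of_canStage_r_ne_zero hi

lemma canInterp_cI_eq_canStage {A : AtomicConcept} {u : CanElem} {n : ℕ}
    (h : (canInterp K).cI A u ≠ 0) (hn : u.depth < n) :
    (canInterp K).cI A u = (canStage K n).c A u :=
  let ⟨_, hi⟩ := exists_mem_active_of_cI_ne_zero h
  canInterp_cI_eq (mem_active_depth hi) hn A

lemma canInterp_rI_eq_canStage {Q : AtomicRole} {u v : CanElem} {n : ℕ}
    (h : (canInterp K).rI Q u v ≠ 0) (hu : u.depth ≤ n) (hv : v.depth ≤ n) :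
    (canInterp K).rI Q u v = (canStage K n).r Q u v :=
  let ⟨_, hui, hvi⟩ := exists_mem_active_of_rI_ne_zero h
  canInterp_rI_eq (canStage_active_mono K hu (mem_active_depth hui))
    (canStage_active_mono K hv (mem_active_depth hvi)) le_rfl Q

lemma termVal_canStage (i : ℕ) (f : Var → CanElem) (t : Term) :
    termVal (canStage K i).toInterp f t = termVal (canInterp K) f t := by
  cases t <;> rfl

end CanonicalStages

def QAtom.edge : QAtom → Sym2 Term
  | QAtom.conceptAt _ t => s(t, t)
  | QAtom.roleAt _ t₁ t₂ => s(t₁, t₂)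
  | QAtom.eqAt z t => s(Term.var z, t)

lemma QAtom.mem_edge_iff {atm : QAtom} {t : Term} : t ∈ atm.edge ↔ t ∈ atm.terms := by
  cases atm <;> simp [edge, terms]

def CQ.gaifmanGraph (q : CQ) : SimpleGraph Term :=
  SimpleGraph.fromEdgeSet {e | e ∈ q.atoms.map QAtom.edge}

def CQ.nonLoopAtoms (q : CQ) : List QAtom := q.atoms.filter fun atm => ¬ atm.edge.IsDiag

namespace CQ

variable {q : CQ}

lemma gaifmanAdj_of_adj {x y : Term} (h : q.gaifmanGraph.Adj x y) : q.gaifmanAdj x y := by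
  obtain ⟨hxy, -⟩ := (SimpleGraph.fromEdgeSet_adj _).1 h
  obtain ⟨atm, hatm, he⟩ := List.mem_map.1 hxy
  exact ⟨atm, hatm, QAtom.mem_edge_iff.1 (he ▸ Sym2.mem_mk_left x y),
    QAtom.mem_edge_iff.1 (he ▸ Sym2.mem_mk_right x y)⟩

lemma reachable_of_reflTransGen {x y : Term} (h : Relation.ReflTransGen q.gaifmanAdj x y) :
    q.gaifmanGraph.Reachable x y := by
  induction h with
  | refl => rfl
  | @tail b c _ hbc ih =>
    obtain ⟨atm, hatm, hb, hc⟩ := hbc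
    by_cases hne : b = c
    · exact hne ▸ ih
    · have he : atm.edge = s(b, c) :=
        (Sym2.mem_and_mem_iff hne).1 ⟨QAtom.mem_edge_iff.2 hb, QAtom.mem_edge_iff.2 hc⟩
      exact ih.trans
        ((SimpleGraph.fromEdgeSet_adj _).2 ⟨List.mem_map.2 ⟨atm, hatm, he⟩, hne⟩).reachable

lemma length_le_of_isPath {x y : Term} {p : q.gaifmanGraph.Walk x y} (hp : p.IsPath) :
    p.length ≤ q.nonLoopAtoms.length := by
  rw [← p.length_edges, ← List.length_map (f := QAtom.edge)]
  refine (hp.isTrail.edges_nodup.subperm fun e he => ?_).length_le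
  obtain ⟨hmem, hdiag⟩ := (SimpleGraph.edgeSet_fromEdgeSet _ ▸ p.edges_subset_edgeSet he :
    e ∈ {e | e ∈ q.atoms.map QAtom.edge} \ Sym2.diagSet)
  obtain ⟨atm, hatm, rfl⟩ := List.mem_map.1 hmem
  exact List.mem_map_of_mem (List.mem_filter.2 ⟨hatm, by simpa using hdiag⟩)

lemma length_nonLoopAtoms_lt {A : AtomicConcept} {t : Term} (h : QAtom.conceptAt A t ∈ q.atoms) :
    q.nonLoopAtoms.length < q.atoms.length :=
  List.length_filter_lt_length_iff_exists.2 ⟨_, h, by simp [QAtom.edge]⟩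

end CQ

lemma SimpleGraph.Walk.le_add_length {V : Type*} {G : SimpleGraph V} {φ : V → ℕ}
    (hφ : ∀ x y, G.Adj x y → φ x ≤ φ y + 1) {x y : V} (p : G.Walk x y) :
    φ x ≤ φ y + p.length := by
  induction p with
  | nil => simp
  | cons h _ ih =>
    have := hφ _ _ h
    rw [SimpleGraph.Walk.length_cons]
    omega

/-- A shortest path to a root uses each non-loop atom at most once. -/
lemma CQ.Rooted.le_length_nonLoopAtoms {q : CQ} (hr : q.Rooted) {φ : Term → ℕ}
    (hφ : ∀ x y, q.gaifmanAdj x y → φ x ≤ φ y + 1)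
    (hvar : ∀ v ∈ q.answerVars, φ (Term.var v) = 0) (hind : ∀ a, φ (Term.ind a) = 0)
    {t : Term} (ht : q.mentionsTerm t) : φ t ≤ q.nonLoopAtoms.length := by
  obtain ⟨t', hreach, hroot⟩ := hr t ht
  obtain ⟨p⟩ := CQ.reachable_of_reflTransGen hreach
  have hφt' : φ t' = 0 := by
    rcases hroot with ⟨v, hv, rfl⟩ | ⟨a, rfl⟩
    exacts [hvar v hv, hind a]
  have := p.bypass.le_add_length fun x y h => hφ x y (CQ.gaifmanAdj_of_adj h)
  have := CQ.length_le_of_isPath p.bypass_isPath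
  omega

section CanonicalModel

variable {K : Ontology}

namespace QAtom

variable {f : Var → CanElem} {atm : QAtom}

lemma mult_canStage_le_canInterp (n : ℕ) :
    atm.mult (canStage K n).toInterp f ≤ atm.mult (canInterp K) f := by
  cases atm with
  | conceptAt A t =>
    simp only [mult, termVal_canStage]
    exact le_iSup (fun i => (canStage K i).c A (termVal (canInterp K) f t)) n
  | roleAt Q t₁ t₂ =>
    simp only [mult, termVal_canStage]
    exact le_iSup (fun i => (canStage K i).r Q _ _) n
  | eqAt z t =>
    simp only [mult, termVal_canStage]
    rfl

lemma depth_termVal_le (hpos : atm.mult (canInterp K) f ≠ 0) {x y : Term}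
    (hx : x ∈ atm.terms) (hy : y ∈ atm.terms) :
    (termVal (canInterp K) f x).depth ≤ (termVal (canInterp K) f y).depth + 1 := by
  cases atm with
  | conceptAt A t =>
    simp only [terms, List.mem_singleton] at hx hy
    rw [hx, hy]
    exact Nat.le_succ _
  | roleAt Q t₁ t₂ =>
    have := depth_le_of_rI_ne_zero hpos
    simp only [terms, List.mem_cons, List.not_mem_nil, or_false] at hx hy
    rcases hx with rfl | rfl <;> rcases hy with rfl | rfl <;> omega
  | eqAt z t =>
    have heq : termVal (canInterp K) f (Term.var z) = termVal (canInterp K) f t :=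
      of_not_not fun hne => hpos (if_neg hne)
    simp only [terms, List.mem_cons, List.not_mem_nil, or_false] at hx hy
    rcases hx with rfl | rfl <;> rcases hy with rfl | rfl <;> simp [heq]

lemma mult_canInterp_eq_canStage {n : ℕ} (hpos : atm.mult (canInterp K) f ≠ 0)
    (hle : ∀ t ∈ atm.terms, (termVal (canInterp K) f t).depth ≤ n)
    (hlt : ∀ A t, atm = conceptAt A t → (termVal (canInterp K) f t).depth < n) :
    atm.mult (canInterp K) f = atm.mult (canStage K n).toInterp f := by
  cases atm with
  | conceptAt A t =>
    simp only [mult, termVal_canStage]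
    exact canInterp_cI_eq_canStage hpos (hlt A t rfl)
  | roleAt Q t₁ t₂ =>
    simp only [mult, termVal_canStage]
    exact canInterp_rI_eq_canStage hpos (hle t₁ (by simp [terms])) (hle t₂ (by simp [terms]))
  | eqAt z t =>
    simp only [mult, termVal_canStage]
    rfl

end QAtom

lemma CQ.prod_mult_canInterp_eq_canStage {q : CQ} (hr : q.Rooted) {f : Var → CanElem}
    (hans : ∀ v ∈ q.answerVars, ∃ b, f v = CanElem.ind b) :
    (q.atoms.map (QAtom.mult (canInterp K) f)).prod
      = (q.atoms.map (QAtom.mult (canStage K q.atoms.length).toInterp f)).prod := by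
  by_cases hpos : ∀ atm ∈ q.atoms, atm.mult (canInterp K) f ≠ 0
  · have hdepth : ∀ t, q.mentionsTerm t →
        (termVal (canInterp K) f t).depth ≤ q.nonLoopAtoms.length := fun t ht =>
      hr.le_length_nonLoopAtoms
        (fun x y ⟨atm, hatm, hx, hy⟩ => QAtom.depth_termVal_le (hpos atm hatm) hx hy)
        (fun v hv => by obtain ⟨b, hb⟩ := hans v hv; simp [termVal, hb, CanElem.depth])
        (fun _ => rfl) ht
    refine congrArg List.prod (List.map_congr_left fun atm hatm => ?_)
    refine QAtom.mult_canInterp_eq_canStage (hpos atm hatm)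
      (fun t ht => (hdepth t ⟨atm, hatm, ht⟩).trans (List.length_filter_le _ _)) ?_
    rintro A t rfl
    exact (hdepth t ⟨_, hatm, List.mem_singleton_self t⟩).trans_lt
      (CQ.length_nonLoopAtoms_lt hatm)
  · push Not at hpos
    obtain ⟨atm, hatm, h0⟩ := hpos
    have h0' := le_antisymm (h0 ▸ QAtom.mult_canStage_le_canInterp (atm := atm) (f := f)
      q.atoms.length) zero_le
    rw [List.prod_eq_zero (List.mem_map.2 ⟨atm, hatm, h0⟩),
      List.prod_eq_zero (List.mem_map.2 ⟨atm, hatm, h0'⟩)]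

end CanonicalModel

theorem statement_6_general (K : Ontology) (q : CQ) (hr : q.Rooted) (a : List Ind) :
    q.bagAnswer (canInterp K) a
      = q.bagAnswer (PreInterp.toInterp (canStage K q.atoms.length)) a := by
  refine congrArg bagSum (funext fun f => CQ.prod_mult_canInterp_eq_canStage hr fun v hv => ?_)
  obtain ⟨b, -, hb⟩ := List.mem_map.1 (f.2.2 ▸ List.mem_map_of_mem hv)
  exact ⟨b, hb.symm⟩

/-- For a satisfiable DL-Lite_core^bag ontology `K` and a rooted
CQ `q` with `n` atoms, the bag answers of `q` over `C(K)` equal the bag answers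
of `q` over the finite stage `C_n(K)`. -/
theorem statement_6 (K : Ontology) (hcore : TBox.IsCore K.tbox)
    (hsat : K.Satisfiable)
    (q : CQ) (hwf : q.WellFormed) (hr : q.Rooted) (a : List Ind) :
    q.bagAnswer (canInterp K) a
      = q.bagAnswer (PreInterp.toInterp (canStage K q.atoms.length)) a :=
  statement_6_general K q hr a
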